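/- Let M and M' be n×n real symmetric matrices, and let 1 ≤ r < n. Let θ_1, …, θ_n denote the eigenvalues of M' ordered by decreasing absolute value, |θ_1| ≥ |θ_2| ≥ … ≥ |θ_n|, and let u'_1, …, u'_r be orthonormal eigenvectors of M' with M' u'_k = θ_k u'_k for k = 1, …, r. Similarly, let u_1, …, u_r be orthonormal eigenvectors of M associated with its r eigenvalues of largest absolute value. Set U = [u_1, …, u_r] and U' = [u'_1, …, u'_r] (the n×r matrices with these columns). If |θ_r| − |θ_{r+1}| − ‖M − M'‖ > 0, then there exists an r×r orthogonal matrix O such that ‖U − U'O‖ ≤ √2·‖M − M'‖ / (|θ_r| − |θ_{r+1}| − ‖M − M'‖). -/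

import Mathlib

/-!
Let `U`, `U'` hold the top `r` eigenvectors of `M`, `M'` and `V` the remaining eigenvectors of
`M'`. Weyl's inequality `|θ_r| - ‖M - M'‖ ≤ |λ_r|` separates the eigenvalues of `M` on `U` from
those of `M'` on `V` by the gap `δ`, so the Sylvester equation
`B D₁ - D₂ B = Vᵀ (M - M') U` for `B = Vᵀ U` yields the sin Θ bound `δ ‖B‖ ≤ ‖M - M'‖`.
Then take `O` from the polar decomposition `U'ᵀ U = O S`: one has
`(U - U' O)ᵀ (U - U' O) = 2 (1 - S)` and `S² = 1 - Bᵀ B`, so the eigenvalues of `S` lie in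
`[1 - ‖B‖², 1]` and `‖U - U' O‖² ≤ 2 ‖B‖²`.
-/

open Matrix
open scoped Matrix.Norms.L2Operator

namespace Matrix

section Semiring

variable {ι κ α : Type*}

theorem of_mul_transpose_eq_one [Fintype ι] [DecidableEq κ] [NonAssocSemiring α]
    {u : κ → ι → α} (hu : ∀ k l, u k ⬝ᵥ u l = if k = l then 1 else 0) :
    of u * (of u)ᵀ = 1 := by
  ext k l
  rw [mul_apply', one_apply]
  exact hu k l

theorem mul_transpose_of_eq_transpose_of_mul_diagonal [Fintype ι] [Fintype κ] [DecidableEq κ]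
    [CommSemiring α] {M : Matrix ι ι α} {u : κ → ι → α} {d : κ → α}
    (hu : ∀ k, M *ᵥ u k = d k • u k) :
    M * (of u)ᵀ = (of u)ᵀ * diagonal d := by
  ext i k
  have h := congrFun (hu k) i
  rw [Pi.smul_apply, smul_eq_mul] at h
  rw [mul_diagonal, mul_comm]
  exact h

theorem transpose_of_mul_of_castAdd_add_natAdd {r m : ℕ} [NonUnitalNonAssocSemiring α]
    (u : Fin (r + m) → ι → α) :
    (of fun k => u (Fin.castAdd m k))ᵀ * of (fun k => u (Fin.castAdd m k)) +
      (of fun l => u (Fin.natAdd r l))ᵀ * of (fun l => u (Fin.natAdd r l)) = (of u)ᵀ * of u := by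
  ext i j
  simp [mul_apply, Fin.sum_univ_add]

theorem diagonal_mul_eq_of_forall_notMem [Fintype ι] [DecidableEq ι] [NonUnitalNonAssocSemiring α]
    (s : Set ι) {C : Matrix ι κ α} (hC : ∀ i ∉ s, ∀ j, C i j = 0) {d d' : ι → α}
    (h : ∀ i ∈ s, d i = d' i) : diagonal d * C = diagonal d' * C := by
  ext i j
  by_cases hi : i ∈ s <;> simp [diagonal_mul, h, hC, hi]

end Semiring

theorem exists_ne_zero_mulVec_eq_zero_of_card_lt {ι κ K : Type*} [Fintype ι] [Fintype κ]
    [Field K] (A : Matrix ι κ K) (h : Fintype.card ι < Fintype.card κ) :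
    ∃ v ≠ 0, A *ᵥ v = 0 := by
  obtain ⟨v, hv, hv0⟩ := (Submodule.ne_bot_iff _).1 <|
    LinearMap.ker_ne_bot_of_finrank_lt (f := A.mulVecLin) (by simpa using h)
  exact ⟨v, hv0, hv⟩

theorem exists_ne_zero_forall_mulVec_eq_zero_of_card_lt {ι κ K : Type*} [Fintype ι]
    [Fintype κ] [Field K] (A : Matrix ι κ K) (s : Finset κ) (t : Finset ι)
    (h : t.card < s.card) :
    ∃ c ≠ 0, (∀ j ∉ s, c j = 0) ∧ ∀ i ∈ t, (A *ᵥ c) i = 0 := by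
  classical
  obtain ⟨v, hv0, hv⟩ :=
    (A.submatrix ((↑) : t → ι) ((↑) : s → κ)).exists_ne_zero_mulVec_eq_zero_of_card_lt
      (by simpa using h)
  refine ⟨fun j => if h : j ∈ s then v ⟨j, h⟩ else 0, fun hc => hv0 ?_, fun j hj => dif_neg hj,
    fun i hi => ?_⟩
  · ext j
    simpa using congrFun hc j
  · have := congrFun hv ⟨i, hi⟩
    simp only [mulVec, dotProduct] at this ⊢
    rw [← Finset.sum_subset (Finset.subset_univ s) fun j _ hj => by simp [hj],
      ← Finset.sum_coe_sort s]
    simpa using this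

section Polar

variable {ι : Type*} [Fintype ι] [DecidableEq ι]

theorem exists_eq_mul_diagonal_of_isDiag_transpose_mul_self {A : Matrix ι ι ℝ}
    (hA : (Aᵀ * A).IsDiag) :
    ∃ (P : Matrix ι ι ℝ) (σ : ι → ℝ), Pᵀ * P = 1 ∧ 0 ≤ σ ∧ A = P * diagonal σ := by
  set a : ι → EuclideanSpace ℝ ι := fun j => WithLp.toLp 2 (Aᵀ j)
  have ha : ∀ i j, inner ℝ (a i) (a j) = (Aᵀ * A) i j := fun i j => by
    simp [a, PiLp.inner_apply, mul_apply, mul_comm]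
  set s : Set ι := {j | ‖a j‖ ≠ 0}
  have hs : Orthonormal ℝ (s.domRestrict fun j => ‖a j‖⁻¹ • a j) := by
    rw [orthonormal_iff_ite]
    rintro ⟨i, hi⟩ ⟨j, hj⟩
    change inner ℝ (‖a i‖⁻¹ • a i) (‖a j‖⁻¹ • a j) = _
    by_cases hij : i = j
    · subst hij
      rw [real_inner_smul_left, real_inner_smul_right, real_inner_self_eq_norm_sq]
      field_simp [show ‖a i‖ ≠ 0 from hi]
      simp
    · simp [real_inner_smul_left, real_inner_smul_right, ha, hA hij, hij]
  obtain ⟨b, hb⟩ := hs.exists_orthonormalBasis_extension_of_card_eq (by simp)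
  refine ⟨(EuclideanSpace.basisFun ι ℝ).toBasis.toMatrix b, fun j => ‖a j‖, ?_,
    fun j => norm_nonneg _, ?_⟩
  · rw [← conjTranspose_eq_transpose_of_trivial]
    exact (EuclideanSpace.basisFun ι ℝ).toMatrix_orthonormalBasis_conjTranspose_mul_self b
  · ext i j
    by_cases hj : ‖a j‖ = 0
    · have : A i j = a j i := rfl
      simp [this, norm_eq_zero.1 hj]
    · rw [mul_diagonal, Module.Basis.toMatrix_apply]
      have hj' : ‖WithLp.toLp 2 (Aᵀ j)‖ ≠ 0 := hj
      simp [hb j hj, a]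
      field_simp

theorem exists_polar_decomposition (H : Matrix ι ι ℝ) :
    ∃ (O Q : Matrix ι ι ℝ) (σ : ι → ℝ), Oᵀ * O = 1 ∧ Qᵀ * Q = 1 ∧ 0 ≤ σ ∧
      H = O * (Q * diagonal σ * Qᵀ) := by
  have hS : (Hᵀ * H).IsHermitian := by
    simpa [conjTranspose_eq_transpose_of_trivial] using isHermitian_conjTranspose_mul_self H
  set Q : Matrix ι ι ℝ := (hS.eigenvectorUnitary : Matrix ι ι ℝ)
  have hQ : Qᵀ * Q = 1 := by
    simpa [Q, star_eq_conjTranspose, conjTranspose_eq_transpose_of_trivial] using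
      Unitary.coe_star_mul_self hS.eigenvectorUnitary
  have hQQ : Q * Qᵀ = 1 := mul_eq_one_comm.1 hQ
  have hdiag : ((H * Q)ᵀ * (H * Q)).IsDiag := by
    have := hS.conjStarAlgAut_star_eigenvectorUnitary
    simp only [Unitary.conjStarAlgAut_apply, star_star, Unitary.coe_star] at this
    rw [transpose_mul, Matrix.mul_assoc, ← Matrix.mul_assoc Hᵀ, ← Matrix.mul_assoc]
    simp only [star_eq_conjTranspose, conjTranspose_eq_transpose_of_trivial] at this
    rw [this]
    exact isDiag_diagonal _
  obtain ⟨P, σ, hP, hσ, hHQ⟩ := exists_eq_mul_diagonal_of_isDiag_transpose_mul_self hdiag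
  refine ⟨P * Qᵀ, Q, σ, ?_, hQ, hσ, ?_⟩
  · rw [transpose_mul, transpose_transpose, Matrix.mul_assoc, ← Matrix.mul_assoc Pᵀ, hP,
      Matrix.one_mul, hQQ]
  · calc H = H * Q * Qᵀ := by rw [Matrix.mul_assoc, hQQ, Matrix.mul_one]
      _ = P * Qᵀ * (Q * diagonal σ * Qᵀ) := by
        rw [hHQ, Matrix.mul_assoc P Qᵀ, ← Matrix.mul_assoc Qᵀ, ← Matrix.mul_assoc Qᵀ, hQ,
          Matrix.one_mul, Matrix.mul_assoc]

end Polar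

section L2OpNorm

variable {ι κ μ : Type*} [Fintype ι] [Fintype κ] [Fintype μ] [DecidableEq κ]

theorem l2_opNorm_transpose [DecidableEq ι] (A : Matrix ι κ ℝ) : ‖Aᵀ‖ = ‖A‖ := by
  rw [← conjTranspose_eq_transpose_of_trivial, l2_opNorm_conjTranspose]

theorem l2_opNorm_sq (A : Matrix ι κ ℝ) : ‖A‖ ^ 2 = ‖Aᵀ * A‖ := by
  rw [sq, ← l2_opNorm_conjTranspose_mul_self, conjTranspose_eq_transpose_of_trivial]

theorem l2_opNorm_one_le [DecidableEq ι] : ‖(1 : Matrix ι ι ℝ)‖ ≤ 1 := by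
  rw [← diagonal_one, l2_opNorm_diagonal]
  exact (pi_norm_le_iff_of_nonneg zero_le_one).2 fun _ => by simp

theorem l2_opNorm_le_one_of_transpose_mul_self {A : Matrix ι κ ℝ} (hA : Aᵀ * A = 1) :
    ‖A‖ ≤ 1 := by
  have h : ‖A‖ ^ 2 ≤ 1 := by
    rw [l2_opNorm_sq, hA]
    exact l2_opNorm_one_le
  exact (sq_le_one_iff₀ (norm_nonneg _)).1 h

theorem l2_opNorm_mul_of_transpose_mul_self [DecidableEq μ] {A : Matrix ι κ ℝ} (hA : Aᵀ * A = 1)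
    (X : Matrix κ μ ℝ) : ‖A * X‖ = ‖X‖ := by
  have h : ‖A * X‖ ^ 2 = ‖X‖ ^ 2 := by
    rw [l2_opNorm_sq, l2_opNorm_sq, transpose_mul, Matrix.mul_assoc, ← Matrix.mul_assoc Aᵀ, hA,
      Matrix.one_mul]
  exact (pow_left_inj₀ (norm_nonneg _) (norm_nonneg _) two_ne_zero).1 h

theorem abs_apply_le_l2_opNorm (A : Matrix ι κ ℝ) (i : ι) (j : κ) : |A i j| ≤ ‖A‖ := by
  have h := A.l2_opNorm_mulVec (EuclideanSpace.single j 1)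
  rw [PiLp.norm_single, norm_one, mul_one] at h
  refine le_trans ?_ h
  simpa using PiLp.norm_apply_le ((EuclideanSpace.equiv ι ℝ).symm
    (A *ᵥ EuclideanSpace.single j 1)) i

theorem transpose_mul_self_apply_self_le (A : Matrix ι κ ℝ) (j : κ) :
    (Aᵀ * A) j j ≤ ‖A‖ ^ 2 := by
  rw [l2_opNorm_sq]
  exact (le_abs_self _).trans (abs_apply_le_l2_opNorm _ j j)

theorem l2_opNorm_diagonal_mul_le [DecidableEq ι] {s : Set ι} {C : Matrix ι κ ℝ}
    (hC : ∀ i ∉ s, ∀ j, C i j = 0) {d : ι → ℝ} {a : ℝ} (ha : 0 ≤ a) (hd : ∀ i ∈ s, |d i| ≤ a) :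
    ‖diagonal d * C‖ ≤ a * ‖C‖ := by
  classical
  rw [diagonal_mul_eq_of_forall_notMem s hC (d' := s.indicator d)
    fun i hi => (Set.indicator_of_mem hi d).symm]
  refine (l2_opNorm_mul _ _).trans (mul_le_mul_of_nonneg_right ?_ (norm_nonneg _))
  rw [l2_opNorm_diagonal]
  refine (pi_norm_le_iff_of_nonneg ha).2 fun i => ?_
  by_cases hi : i ∈ s <;> simp [hi, hd, ha]

theorem mul_l2_opNorm_le_diagonal_mul [DecidableEq ι] {s : Set ι} {C : Matrix ι κ ℝ}
    (hC : ∀ i ∉ s, ∀ j, C i j = 0) {d : ι → ℝ} {a : ℝ} (ha : 0 ≤ a) (hd : ∀ i ∈ s, a ≤ |d i|) :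
    a * ‖C‖ ≤ ‖diagonal d * C‖ := by
  classical
  rcases ha.eq_or_lt with rfl | ha
  · simp
  -- outside `s` the diagonal can be changed to `a`, making it invertible
  set d' : ι → ℝ := fun i => if i ∈ s then d i else a
  have hd' : ∀ i, a ≤ |d' i| := fun i => by
    by_cases hi : i ∈ s <;> simp [d', hi, hd, abs_of_pos ha]
  have hC' : diagonal d'⁻¹ * (diagonal d' * C) = C := by
    rw [← Matrix.mul_assoc, diagonal_mul_diagonal]
    convert Matrix.one_mul C
    rw [← diagonal_one]
    congr with i
    exact inv_mul_cancel₀ fun h => by linarith [hd' i, abs_eq_zero.2 h]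
  have hinv := l2_opNorm_diagonal_mul_le (s := Set.univ) (C := diagonal d' * C)
    (by simp) (inv_nonneg.2 ha.le) (d := d'⁻¹) fun i _ => by
      rw [Pi.inv_apply, abs_inv]; exact inv_anti₀ ha (hd' i)
  rw [hC'] at hinv
  rw [diagonal_mul_eq_of_forall_notMem s hC (d' := d') fun i hi => by simp [d', hi]]
  calc a * ‖C‖ ≤ a * (a⁻¹ * ‖diagonal d' * C‖) := by gcongr
    _ = ‖diagonal d' * C‖ := by field_simp

theorem l2_opNorm_mul_diagonal_mul_transpose_le {Q : Matrix κ κ ℝ} (hQ : Qᵀ * Q = 1)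
    {d : κ → ℝ} {a : ℝ} (ha : 0 ≤ a) (hd : ∀ i, |d i| ≤ a) :
    ‖Q * diagonal d * Qᵀ‖ ≤ a :=
  calc ‖Q * diagonal d * Qᵀ‖ ≤ ‖Q‖ * ‖diagonal d‖ * ‖Qᵀ‖ := by
        grw [l2_opNorm_mul, l2_opNorm_mul]
    _ ≤ 1 * a * 1 := by
        gcongr
        · exact l2_opNorm_le_one_of_transpose_mul_self hQ
        · rw [l2_opNorm_diagonal]
          exact (pi_norm_le_iff_of_nonneg ha).2 fun i => by simpa using hd i
        · exact l2_opNorm_le_one_of_transpose_mul_self (mul_eq_one_comm.1 hQ)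
    _ = a := by ring

theorem mul_l2_opNorm_le_mul_diagonal_sub_diagonal_mul [DecidableEq ι] (B : Matrix ι κ ℝ)
    {d₁ : κ → ℝ} {d₂ : ι → ℝ} {ρ δ : ℝ} (hρ : 0 ≤ ρ) (hδ : 0 ≤ δ)
    (hd₁ : ∀ k, ρ + δ ≤ |d₁ k|) (hd₂ : ∀ i, |d₂ i| ≤ ρ) :
    δ * ‖B‖ ≤ ‖B * diagonal d₁ - diagonal d₂ * B‖ := by
  have hlow : (ρ + δ) * ‖B‖ ≤ ‖B * diagonal d₁‖ := by
    rw [← l2_opNorm_transpose (B * diagonal d₁), transpose_mul, diagonal_transpose,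
      ← l2_opNorm_transpose B]
    exact mul_l2_opNorm_le_diagonal_mul (s := Set.univ) (by simp) (by positivity)
      fun k _ => hd₁ k
  have hup : ‖diagonal d₂ * B‖ ≤ ρ * ‖B‖ :=
    l2_opNorm_diagonal_mul_le (s := Set.univ) (by simp) hρ fun i _ => hd₂ i
  linarith [norm_sub_norm_le (B * diagonal d₁) (diagonal d₂ * B)]

theorem mul_l2_opNorm_transpose_mul_le_l2_opNorm_sub [DecidableEq ι] [DecidableEq μ]
    {M M' : Matrix ι ι ℝ} {U : Matrix ι κ ℝ} {V : Matrix ι μ ℝ} (hM' : M'.IsSymm)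
    (hU : Uᵀ * U = 1) (hV : Vᵀ * V = 1) {d₁ : κ → ℝ} {d₂ : μ → ℝ}
    (hMU : M * U = U * diagonal d₁) (hM'V : M' * V = V * diagonal d₂) {ρ δ : ℝ} (hρ : 0 ≤ ρ)
    (hδ : 0 ≤ δ) (hd₁ : ∀ k, ρ + δ ≤ |d₁ k|) (hd₂ : ∀ l, |d₂ l| ≤ ρ) :
    δ * ‖Vᵀ * U‖ ≤ ‖M - M'‖ := by
  have hVM' : Vᵀ * M' = diagonal d₂ * Vᵀ := by
    rw [← hM'.eq, ← transpose_mul, hM'V, transpose_mul, diagonal_transpose]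
  have hsylvester : Vᵀ * U * diagonal d₁ - diagonal d₂ * (Vᵀ * U) = Vᵀ * (M - M') * U := by
    rw [Matrix.mul_assoc, ← hMU, ← Matrix.mul_assoc, ← Matrix.mul_assoc (diagonal d₂), ← hVM',
      Matrix.mul_sub, Matrix.sub_mul]
  calc δ * ‖Vᵀ * U‖ ≤ ‖Vᵀ * (M - M') * U‖ := hsylvester ▸
        mul_l2_opNorm_le_mul_diagonal_sub_diagonal_mul _ hρ hδ hd₁ hd₂
    _ ≤ ‖Vᵀ‖ * ‖M - M'‖ * ‖U‖ := by grw [l2_opNorm_mul, l2_opNorm_mul]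
    _ ≤ 1 * ‖M - M'‖ * 1 := by
        gcongr
        · exact (l2_opNorm_transpose V).trans_le (l2_opNorm_le_one_of_transpose_mul_self hV)
        · exact l2_opNorm_le_one_of_transpose_mul_self hU
    _ = ‖M - M'‖ := by ring

theorem abs_one_sub_le_l2_opNorm_sq {G : Matrix ι κ ℝ} {σ : κ → ℝ} (hσ : 0 ≤ σ)
    (h : (diagonal fun i => σ i * σ i) = 1 - Gᵀ * G) (i : κ) : |1 - σ i| ≤ ‖G‖ ^ 2 := by
  have hσ_sq : σ i * σ i = 1 - (Gᵀ * G) i i := by simpa using congrFun (congrFun h i) i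
  have h₁ := transpose_mul_self_apply_self_le G i
  have h₂ : 0 ≤ (Gᵀ * G) i i := Finset.sum_nonneg fun _ _ => mul_self_nonneg _
  have hσ₁ : σ i ≤ 1 := by nlinarith [hσ i]
  rw [abs_of_nonneg (by linarith)]
  nlinarith [mul_nonneg (hσ i) (sub_nonneg.2 hσ₁)]

theorem transpose_mul_self_sub_mul_eq {U U' : Matrix ι κ ℝ} {O S : Matrix κ κ ℝ}
    (hU : Uᵀ * U = 1) (hU' : U'ᵀ * U' = 1) (hO : Oᵀ * O = 1) (hS : Sᵀ = S)
    (hH : U'ᵀ * U = O * S) :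
    (U - U' * O)ᵀ * (U - U' * O) = (2 : ℝ) • (1 - S) := by
  have hUU' : Uᵀ * U' = S * Oᵀ := by
    rw [← transpose_transpose (Uᵀ * U'), transpose_mul, transpose_transpose, hH, transpose_mul,
      hS]
  rw [transpose_sub, transpose_mul, Matrix.sub_mul, Matrix.mul_sub, Matrix.mul_sub, hU,
    ← Matrix.mul_assoc Uᵀ U' O, hUU', Matrix.mul_assoc Oᵀ U'ᵀ U, hH,
    Matrix.mul_assoc Oᵀ U'ᵀ (U' * O), ← Matrix.mul_assoc U'ᵀ U' O, hU', Matrix.one_mul, hO,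
    Matrix.mul_assoc S Oᵀ O, hO, Matrix.mul_one, ← Matrix.mul_assoc Oᵀ O S, hO,
    Matrix.one_mul, two_smul]
  abel

theorem exists_orthogonal_l2_opNorm_sub_mul_le [DecidableEq ι] {U U' : Matrix ι κ ℝ}
    {V : Matrix ι μ ℝ} (hU : Uᵀ * U = 1) (hU' : U'ᵀ * U' = 1) (hV : U' * U'ᵀ + V * Vᵀ = 1) :
    ∃ O : Matrix κ κ ℝ, Oᵀ * O = 1 ∧ ‖U - U' * O‖ ≤ √2 * ‖Vᵀ * U‖ := by
  obtain ⟨O, Q, σ, hO, hQ, hσ, hH⟩ := (U'ᵀ * U).exists_polar_decomposition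
  set S := Q * diagonal σ * Qᵀ with hSdef
  have hSt : Sᵀ = S := by simp [hSdef, transpose_mul, Matrix.mul_assoc]
  have hB : (U'ᵀ * U)ᵀ * (U'ᵀ * U) + (Vᵀ * U)ᵀ * (Vᵀ * U) = 1 :=
    calc _ = Uᵀ * (U' * U'ᵀ + V * Vᵀ) * U := by
          simp only [transpose_mul, transpose_transpose, Matrix.mul_add, Matrix.add_mul,
            Matrix.mul_assoc]
      _ = 1 := by rw [hV, Matrix.mul_one, hU]
  have hσσ : (diagonal fun i => σ i * σ i) = 1 - (Vᵀ * U * Q)ᵀ * (Vᵀ * U * Q) :=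
    calc (diagonal fun i => σ i * σ i) = Qᵀ * ((U'ᵀ * U)ᵀ * (U'ᵀ * U)) * Q := by
          rw [hH, transpose_mul, hSt, Matrix.mul_assoc S, ← Matrix.mul_assoc Oᵀ, hO,
            Matrix.one_mul]
          simp only [hSdef, Matrix.mul_assoc, ← Matrix.mul_assoc Qᵀ Q, hQ, Matrix.one_mul,
            diagonal_mul_diagonal, Matrix.mul_one]
      _ = Qᵀ * (1 - (Vᵀ * U)ᵀ * (Vᵀ * U)) * Q := by
          rw [← hB, add_sub_cancel_right]
      _ = 1 - (Vᵀ * U * Q)ᵀ * (Vᵀ * U * Q) := by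
          rw [Matrix.mul_sub, Matrix.sub_mul, Matrix.mul_one, hQ, transpose_mul (Vᵀ * U) Q]
          simp only [Matrix.mul_assoc]
  have h1S : ‖1 - S‖ ≤ ‖Vᵀ * U‖ ^ 2 := by
    rw [show 1 - S = Q * diagonal (1 - σ) * Qᵀ by
      rw [show diagonal (1 - σ) = 1 - diagonal σ by rw [← diagonal_one, diagonal_sub]; rfl,
        Matrix.mul_sub, Matrix.sub_mul, Matrix.mul_one, mul_eq_one_comm.1 hQ]]
    refine l2_opNorm_mul_diagonal_mul_transpose_le hQ (by positivity) fun i => ?_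
    refine (abs_one_sub_le_l2_opNorm_sq hσ hσσ i).trans ?_
    grw [l2_opNorm_mul, l2_opNorm_le_one_of_transpose_mul_self hQ, mul_one]
  refine ⟨O, hO, ?_⟩
  have h : ‖U - U' * O‖ ^ 2 ≤ (√2 * ‖Vᵀ * U‖) ^ 2 := by
    rw [l2_opNorm_sq, transpose_mul_self_sub_mul_eq hU hU' hO hSt hH, norm_smul, mul_pow,
      Real.sq_sqrt zero_le_two]
    simpa using mul_le_mul_of_nonneg_left h1S zero_le_two
  exact (pow_le_pow_iff_left₀ (norm_nonneg _) (by positivity) two_ne_zero).1 h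

end L2OpNorm

theorem abs_le_abs_add_l2_opNorm_sub {n : ℕ} {M M' W W' : Matrix (Fin n) (Fin n) ℝ}
    {lam θ : Fin n → ℝ} (hW : Wᵀ * W = 1) (hW' : W'ᵀ * W' = 1) (hMW : M * W = W * diagonal lam)
    (hM'W' : M' * W' = W' * diagonal θ) (hlam : Antitone fun i => |lam i|)
    (hθ : Antitone fun i => |θ i|) (k : Fin n) :
    |θ k| ≤ |lam k| + ‖M - M'‖ := by
  -- `X` lies in the span of the first `k + 1` columns of `W'` and is orthogonal to the first `k`
  -- columns of `W`
  obtain ⟨c, hc0, hc_supp, hc_orth⟩ := (Wᵀ * W').exists_ne_zero_forall_mulVec_eq_zero_of_card_lt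
    (Finset.Iic k) (Finset.Iio k) (by simp)
  set X := W' * replicateCol Unit c
  have hWtX : Wᵀ * X = replicateCol Unit ((Wᵀ * W') *ᵥ c) := by
    rw [replicateCol_mulVec, Matrix.mul_assoc]
  have hWWt : W * Wᵀ = 1 := mul_eq_one_comm.1 hW
  have hnormX : ‖X‖ = ‖replicateCol Unit c‖ := l2_opNorm_mul_of_transpose_mul_self hW' _
  have hX : 0 < ‖X‖ := by
    rw [hnormX]
    exact norm_pos_iff.2 ((replicateCol_eq_zero c).not.2 hc0)
  have hlow : |θ k| * ‖X‖ ≤ ‖M' * X‖ := by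
    rw [hnormX, ← Matrix.mul_assoc, hM'W', Matrix.mul_assoc,
      l2_opNorm_mul_of_transpose_mul_self hW']
    exact mul_l2_opNorm_le_diagonal_mul (s := ↑(Finset.Iic k)) (fun i hi _ => hc_supp i hi)
      (abs_nonneg _) fun i hi => hθ (Finset.mem_Iic.1 hi)
  have hup : ‖M * X‖ ≤ |lam k| * ‖X‖ := by
    have hMX : M * X = W * (diagonal lam * (Wᵀ * X)) :=
      calc M * X = M * W * Wᵀ * X := by rw [Matrix.mul_assoc M W, hWWt, Matrix.mul_one]
        _ = W * (diagonal lam * (Wᵀ * X)) := by rw [hMW]; simp only [Matrix.mul_assoc]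
    rw [hMX, l2_opNorm_mul_of_transpose_mul_self hW,
      ← l2_opNorm_mul_of_transpose_mul_self (A := Wᵀ) (by rwa [transpose_transpose]) X]
    refine l2_opNorm_diagonal_mul_le (s := {i | k ≤ i}) (fun i hi _ => ?_) (abs_nonneg _)
      fun i hi => hlam hi
    rw [hWtX, replicateCol_apply]
    exact hc_orth i (Finset.mem_Iio.2 (not_le.1 hi))
  have htri : ‖M' * X‖ ≤ ‖M * X‖ + ‖M - M'‖ * ‖X‖ :=
    calc ‖M' * X‖ = ‖M * X - (M - M') * X‖ := by rw [Matrix.sub_mul, sub_sub_cancel]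
      _ ≤ ‖M * X‖ + ‖(M - M') * X‖ := norm_sub_le _ _
      _ ≤ ‖M * X‖ + ‖M - M'‖ * ‖X‖ := by gcongr; exact l2_opNorm_mul _ _
  nlinarith

end Matrix

/-- Davis–Kahan type bound: if `M, M'` are symmetric `n × n` real matrices with orthonormal
eigenbases `u` (eigenvalues `lam`) and `u'` (eigenvalues `θ`), both ordered by decreasing
absolute value, and the gap `|θ_r| - |θ_{r+1}| - ‖M - M'‖` is positive, then there is an
orthogonal `r × r` matrix `O` with
`‖U - U' O‖ ≤ √2 ‖M - M'‖ / (|θ_r| - |θ_{r+1}| - ‖M - M'‖)`, where `U` (resp. `U'`) has as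
columns the first `r` eigenvectors of `M` (resp. `M'`). -/
theorem davis_kahan_sin_theta (n r : ℕ) (hrn : r < n)
    (M M' : Matrix (Fin n) (Fin n) ℝ) (hM' : M'.IsSymm)
    (lam θ : Fin n → ℝ) (u u' : Fin n → Fin n → ℝ)
    (hlam_dec : ∀ i j : Fin n, i ≤ j → |lam j| ≤ |lam i|)
    (hθ_dec : ∀ i j : Fin n, i ≤ j → |θ j| ≤ |θ i|)
    (hu_orth : ∀ k l : Fin n, u k ⬝ᵥ u l = if k = l then 1 else 0)
    (hu'_orth : ∀ k l : Fin n, u' k ⬝ᵥ u' l = if k = l then 1 else 0)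
    (hu_eig : ∀ k : Fin n, M.mulVec (u k) = lam k • u k)
    (hu'_eig : ∀ k : Fin n, M'.mulVec (u' k) = θ k • u' k)
    (hgap : 0 < |θ ⟨r - 1, by omega⟩| - |θ ⟨r, hrn⟩| - ‖M - M'‖) :
    ∃ O : Matrix (Fin r) (Fin r) ℝ, Oᵀ * O = 1 ∧
      ‖(Matrix.of fun (i : Fin n) (k : Fin r) => u (Fin.castLE hrn.le k) i) -
        (Matrix.of fun (i : Fin n) (k : Fin r) => u' (Fin.castLE hrn.le k) i) * O‖ ≤
      Real.sqrt 2 * ‖M - M'‖ / (|θ ⟨r - 1, by omega⟩| - |θ ⟨r, hrn⟩| - ‖M - M'‖) := by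
  obtain ⟨m, rfl⟩ : ∃ m, n = r + m := ⟨n - r, by omega⟩
  have hU := of_mul_transpose_eq_one (u := fun k => u (Fin.castAdd m k)) fun k l => by
    simp [hu_orth]
  have hU' := of_mul_transpose_eq_one (u := fun k => u' (Fin.castAdd m k))
    fun k l => by simp [hu'_orth]
  have hV := of_mul_transpose_eq_one (u := fun l => u' (Fin.natAdd r l)) fun k l => by
    simp [hu'_orth]
  have hsplit := (transpose_of_mul_of_castAdd_add_natAdd u').trans
    (mul_eq_one_comm.1 (of_mul_transpose_eq_one hu'_orth))
  have hweyl := abs_le_abs_add_l2_opNorm_sub (of_mul_transpose_eq_one hu_orth)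
    (of_mul_transpose_eq_one hu'_orth) (mul_transpose_of_eq_transpose_of_mul_diagonal hu_eig)
    (mul_transpose_of_eq_transpose_of_mul_diagonal hu'_eig) hlam_dec hθ_dec ⟨r - 1, by omega⟩
  have hsin := mul_l2_opNorm_transpose_mul_le_l2_opNorm_sub hM' hU hV
    (mul_transpose_of_eq_transpose_of_mul_diagonal fun k => hu_eig _)
    (mul_transpose_of_eq_transpose_of_mul_diagonal fun l => hu'_eig _) (abs_nonneg _) hgap.le
    (fun k => by
      linarith [hlam_dec (Fin.castAdd m k) ⟨r - 1, by omega⟩ (by simp [Fin.le_def]; omega)])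
    (fun l => hθ_dec ⟨r, hrn⟩ _ (by simp [Fin.le_def]))
  obtain ⟨O, hO, hdist⟩ := exists_orthogonal_l2_opNorm_sub_mul_le hU hU' hsplit
  refine ⟨O, hO, hdist.trans ?_⟩
  rw [mul_div_assoc]
  gcongr
  rwa [le_div_iff₀ hgap, mul_comm]
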